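/- arXiv:1712.05822 — 2 statements merged into one kernel-verified Lean document; each statement's English description precedes it below -/
import Mathlib

section
/- In a rooted tree with n' ≥ 2 edges, the number of nodes that have degree (number of children) at most one and are not the root is at least n'/2. -/
/-- In a rooted tree with `n' ≥ 2` edges, the number of non-root nodes with at most
one child is at least `n'/2`. The tree is given by a finite node set `V`, a root,
and a parent function (with every node reaching the root by iterating `parent`). -/
theorem stmt0 {V : Type*} [Fintype V] [DecidableEq V]
    (root : V) (parent : V → V)
    (hroot : parent root = root)
    (htree : ∀ v : V, ∃ j : ℕ, parent^[j] v = root)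
    (n' : ℕ) (hn' : n' = (Finset.univ.filter (fun v : V => v ≠ root)).card)
    (h2 : 2 ≤ n') :
    n' ≤ 2 * (Finset.univ.filter (fun v : V => v ≠ root ∧
        (Finset.univ.filter (fun w : V => w ≠ root ∧ parent w = v)).card ≤ 1)).card := by
  classical
  set c : V → ℕ := fun v => (Finset.univ.filter (fun w : V => w ≠ root ∧ parent w = v)).card
    with hc
  set A : Finset V := Finset.univ.filter (fun v : V => v ≠ root) with hA
  -- total children count equals n'
  have hsum : ∑ v : V, c v = n' := by
    rw [hn']
    have := Finset.card_eq_sum_card_fiberwise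
      (s := A) (t := Finset.univ) (f := parent) (fun x _ => Finset.mem_univ _)
    rw [this]
    apply Finset.sum_congr rfl
    intro v _
    rw [hc, hA, Finset.filter_filter]
  -- split A into small (≤1 child) and big (≥2 children) parts
  set U : Finset V := A.filter (fun v => c v ≤ 1) with hU
  set B : Finset V := A.filter (fun v => ¬ c v ≤ 1) with hB
  have hcardsplit : U.card + B.card = A.card := Finset.card_filter_add_card_filter_not _
  have hBsum : 2 * B.card ≤ ∑ v ∈ B, c v := by
    calc 2 * B.card = ∑ _v ∈ B, 2 := by rw [Finset.sum_const, smul_eq_mul, mul_comm]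
    _ ≤ ∑ v ∈ B, c v := Finset.sum_le_sum (fun v hv => by
        have := (Finset.mem_filter.mp hv).2
        omega)
  have hAsum : ∑ v ∈ B, c v ≤ n' := by
    calc ∑ v ∈ B, c v ≤ ∑ v : V, c v :=
      Finset.sum_le_sum_of_subset (Finset.filter_subset _ _ |>.trans (Finset.filter_subset _ _))
    _ = n' := hsum
  have hgoal : Finset.univ.filter (fun v : V => v ≠ root ∧
      (Finset.univ.filter (fun w : V => w ≠ root ∧ parent w = v)).card ≤ 1) = U := by
    rw [hU, hA, Finset.filter_filter]
  rw [hgoal]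
  have hAcard : A.card = n' := hn'.symm
  omega
end

section
/- Every subtree of a top tree T for a tree t evaluates to (an isomorphic copy of) a subcluster of t. -/
/-- Clusters: ordered labelled rooted trees in which distinguished leaves may be
marked as bottom boundary nodes ("holes"); rank = number of holes. -/
inductive CTree (L : Type) where
  | hole : L → CTree L
  | node : L → List (CTree L) → CTree L

/-- The rank of a cluster: its number of boundary holes. -/
def CTree.rank {L : Type} : CTree L → ℕ
  | .hole _ => 1
  | .node _ cs => (cs.attach.map (fun c => CTree.rank c.1)).sum
decreasing_by
  have := List.sizeOf_lt_of_mem c.2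
  simp only [CTree.node.sizeOf_spec]
  omega

/-- The label of the root. -/
def CTree.rootLabel {L : Type} : CTree L → L
  | .hole l => l
  | .node l _ => l

/-- The labels of the boundary holes, in left-to-right order. -/
def CTree.holeLabels {L : Type} : CTree L → List L
  | .hole l => [l]
  | .node _ cs => (cs.attach.map (fun c => CTree.holeLabels c.1)).foldr (· ++ ·) []
decreasing_by
  have := List.sizeOf_lt_of_mem c.2
  simp only [CTree.node.sizeOf_spec]
  omega

/-- Vertical merge: substitute `t` for the bottom boundary hole of `s`. -/
def CTree.vmerge {L : Type} (s t : CTree L) : CTree L :=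
  match s with
  | .hole _ => t
  | .node l cs => .node l (cs.attach.map (fun c => CTree.vmerge c.1 t))
decreasing_by
  have := List.sizeOf_lt_of_mem c.2
  simp only [CTree.node.sizeOf_spec]
  omega

/-- Top trees: binary trees whose leaves are atomic clusters `(a, b, i)` (an edge
from an `a`-labelled node to a `b`-labelled node, with rank bit `i`) and whose
internal nodes are labelled with the vertical or horizontal merge operation. -/
inductive TopTree (L : Type) where
  | leaf : L → L → Bool → TopTree L
  | vmerge : TopTree L → TopTree L → TopTree L
  | hmerge : TopTree L → TopTree L → TopTree L

/-- Partial evaluation of a top tree to a cluster. -/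
def TopTree.eval {L : Type} [DecidableEq L] : TopTree L → Option (CTree L)
  | .leaf a b i => some (.node a [if i then CTree.hole b else CTree.node b []])
  | .vmerge T₁ T₂ =>
    match T₁.eval, T₂.eval with
    | some c₁, some c₂ =>
      if c₁.rank = 1 ∧ c₁.holeLabels = [c₂.rootLabel] then some (c₁.vmerge c₂) else none
    | _, _ => none
  | .hmerge T₁ T₂ =>
    match T₁.eval, T₂.eval with
    | some (.node a cs), some (.node b ds) =>
      if a = b ∧ (CTree.node a cs).rank + (CTree.node b ds).rank ≤ 1 then
        some (.node a (cs ++ ds))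
      else none
    | _, _ => none

/-- `CSub s t`: `s` is a (full) subtree of `t`, i.e. `s = t(v)` for a node `v`. -/
inductive CSub {L : Type} : CTree L → CTree L → Prop
  | refl (t : CTree L) : CSub t t
  | child {s c : CTree L} {l : L} {cs : List (CTree L)} :
      c ∈ cs → CSub s c → CSub s (.node l cs)

/-- `Punch c c'`: `c'` is obtained from `c` by replacing the subtree rooted at
one node `u` of `c` by a hole labelled with the label of `u`. -/
inductive Punch {L : Type} : CTree L → CTree L → Prop
  | top (c : CTree L) : Punch c (.hole c.rootLabel)
  | inside {c c' : CTree L} (l : L) (pre post : List (CTree L)) :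
      Punch c c' → Punch (.node l (pre ++ c :: post)) (.node l (pre ++ c' :: post))

/-- `StrictPunch c c'`: `c'` is obtained from `c` by punching a hole strictly
below the root of `c`. -/
def StrictPunch {L : Type} (c c' : CTree L) : Prop :=
  ∃ (l : L) (pre post : List (CTree L)) (d d' : CTree L),
    c = .node l (pre ++ d :: post) ∧ c' = .node l (pre ++ d' :: post) ∧ Punch d d'

/-- `IsSubcluster c t`: `c` is (an isomorphic copy of) a subcluster of `t`:
there is a node `v` of `t` with children `u_1, …, u_d` and indices `i ≤ j` such
that `c` is induced by `v` together with the subtrees `t(u_i), …, t(u_j)`,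
possibly with the subtree rooted at one node `u` strictly below `v` replaced by
a bottom boundary hole. -/
def IsSubcluster {L : Type} (c t : CTree L) : Prop :=
  ∃ (l : L) (cs : List (CTree L)) (i j : ℕ),
    CSub (.node l cs) t ∧ ((cs.drop i).take j) ≠ [] ∧
    (c = .node l ((cs.drop i).take j) ∨ StrictPunch (.node l ((cs.drop i).take j)) c)

/-- `TSub S T`: `S` is a subtree of the top tree `T`. -/
inductive TSub {L : Type} : TopTree L → TopTree L → Prop
  | refl (T : TopTree L) : TSub T T
  | vleft {S T₁ T₂} : TSub S T₁ → TSub S (.vmerge T₁ T₂)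
  | vright {S T₁ T₂} : TSub S T₂ → TSub S (.vmerge T₁ T₂)
  | hleft {S T₁ T₂} : TSub S T₁ → TSub S (.hmerge T₁ T₂)
  | hright {S T₁ T₂} : TSub S T₂ → TSub S (.hmerge T₁ T₂)

/-! Induction on the position of `S` in `T`. The root evaluates to `t`, which is the subcluster
formed by all children of its root. A horizontal merge only concatenates sibling lists, so a
segment of the children of a node stays such a segment. In a vertical merge `c₁ ⊙ᵥ c₂`, the
cluster `c₂` is a full subtree of the result, and a subcluster of `c₁` has at most one hole
(every evaluated cluster has rank `≤ 1`): either it misses the hole of `c₁` and is untouched by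
the merge, or that hole lies under it and the copy of `c₂` plugged in is cut off again by
punching a hole at the same node. -/

theorem List.exists_eq_append_cons_of_sum_map_eq_one {α : Type*} {f : α → ℕ} {l : List α}
    (h : (l.map f).sum = 1) :
    ∃ pre a post, l = pre ++ a :: post ∧ f a = 1 ∧ ((pre ++ post).map f).sum = 0 := by
  induction l with
  | nil => simp at h
  | cons a l ih =>
    rw [List.map_cons, List.sum_cons] at h
    rcases Nat.eq_zero_or_pos (f a) with ha | ha
    · obtain ⟨pre, b, post, rfl, hb, hz⟩ := ih (by omega)
      refine ⟨a :: pre, b, post, rfl, hb, ?_⟩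
      simpa [ha] using hz
    · exact ⟨[], a, l, rfl, by omega, by simp only [List.nil_append]; omega⟩

theorem List.isInfix_iff_exists_eq_take_drop {α : Type*} {s l : List α} :
    s <:+: l ↔ ∃ i j, s = (l.drop i).take j := by
  constructor
  · rintro ⟨pre, post, rfl⟩
    exact ⟨pre.length, s.length, by simp⟩
  · rintro ⟨i, j, rfl⟩
    exact (List.take_prefix j _).isInfix.trans (List.drop_suffix i l).isInfix

open scoped List

namespace CTree

variable {L : Type}

@[induction_eliminator]
theorem induction {motive : CTree L → Prop} (hole : ∀ l, motive (hole l))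
    (node : ∀ l cs, (∀ c ∈ cs, motive c) → motive (node l cs)) : ∀ c, motive c
  | .hole l => hole l
  | .node l cs => node l cs fun c _ => induction hole node c
termination_by c => sizeOf c
decreasing_by
  have := List.sizeOf_lt_of_mem ‹c ∈ cs›
  simp only [CTree.node.sizeOf_spec]
  omega

@[simp] theorem rank_hole (l : L) : (hole l).rank = 1 := by rw [rank]

@[simp] theorem rank_node (l : L) (cs : List (CTree L)) :
    (node l cs).rank = (cs.map rank).sum := by
  rw [rank, List.attach_map_val]

@[simp] theorem holeLabels_hole (l : L) : (hole l).holeLabels = [l] := by rw [holeLabels]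

@[simp] theorem holeLabels_node (l : L) (cs : List (CTree L)) :
    (node l cs).holeLabels = (cs.map holeLabels).flatten := by
  rw [holeLabels, List.attach_map_val, List.foldr_map, List.foldr_append_eq_append, List.append_nil]

@[simp] theorem vmerge_hole (l : L) (b : CTree L) : (hole l).vmerge b = b := by rw [vmerge]

@[simp] theorem vmerge_node (l : L) (cs : List (CTree L)) (b : CTree L) :
    (node l cs).vmerge b = node l (cs.map (vmerge · b)) := by
  rw [vmerge, List.attach_map_val (f := (vmerge · b))]

theorem length_holeLabels (c : CTree L) : c.holeLabels.length = c.rank := by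
  induction c with
  | hole l => simp
  | node l cs ih =>
    simp only [holeLabels_node, rank_node, List.length_flatten, List.map_map]
    exact congrArg List.sum (List.map_congr_left ih)

theorem holeLabels_eq_nil_of_rank_eq_zero {c : CTree L} (h : c.rank = 0) : c.holeLabels = [] := by
  rwa [← List.length_eq_zero_iff, length_holeLabels]

theorem vmerge_of_rank_eq_zero (b : CTree L) {c : CTree L} (h : c.rank = 0) : c.vmerge b = c := by
  induction c with
  | hole l => simp at h
  | node l cs ih =>
    simp only [rank_node, List.sum_eq_zero_iff, List.mem_map] at h
    rw [vmerge_node, List.map_congr_left (g := id) fun c hc => ih c hc (h _ ⟨c, hc, rfl⟩),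
      List.map_id]

theorem rank_vmerge (c b : CTree L) : (c.vmerge b).rank = c.rank * b.rank := by
  induction c with
  | hole l => simp
  | node l cs ih =>
    simp only [vmerge_node, rank_node, List.map_map, ← List.sum_map_mul_right]
    exact congrArg List.sum (List.map_congr_left ih)

section AppendCons

variable {l : L} {pre post : List (CTree L)} {d : CTree L}

theorem rank_node_append_cons :
    (node l (pre ++ d :: post)).rank = d.rank + ((pre ++ post).map rank).sum := by
  simp only [rank_node, List.map_append, List.map_cons, List.sum_append, List.sum_cons]
  omega

theorem rank_eq_zero_of_mem (hz : ((pre ++ post).map rank).sum = 0) {x : CTree L}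
    (hx : x ∈ pre ++ post) : x.rank = 0 :=
  List.sum_eq_zero_iff.mp hz _ (List.mem_map_of_mem hx)

theorem holeLabels_node_append_cons (hz : ((pre ++ post).map rank).sum = 0) :
    (node l (pre ++ d :: post)).holeLabels = d.holeLabels := by
  have hnil : ∀ xs ⊆ pre ++ post, (xs.map holeLabels).flatten = [] := fun xs hxs => by
    simpa [List.flatten_eq_nil_iff] using fun x hx =>
      holeLabels_eq_nil_of_rank_eq_zero (rank_eq_zero_of_mem hz (hxs hx))
  simp [hnil pre (List.subset_append_left _ _), hnil post (List.subset_append_right _ _)]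

theorem vmerge_node_append_cons (hz : ((pre ++ post).map rank).sum = 0) (b : CTree L) :
    (node l (pre ++ d :: post)).vmerge b = node l (pre ++ d.vmerge b :: post) := by
  have hid : ∀ xs ⊆ pre ++ post, xs.map (vmerge · b) = xs := fun xs hxs => by
    conv_rhs => rw [← List.map_id xs]
    exact List.map_congr_left fun x hx => vmerge_of_rank_eq_zero b (rank_eq_zero_of_mem hz (hxs hx))
  simp only [vmerge_node, List.map_append, List.map_cons,
    hid pre (List.subset_append_left _ _), hid post (List.subset_append_right _ _)]

end AppendCons

theorem exists_eq_append_cons_of_rank_node_eq_one {l : L} {cs : List (CTree L)}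
    (h : (node l cs).rank = 1) :
    ∃ pre d post, cs = pre ++ d :: post ∧ d.rank = 1 ∧ ((pre ++ post).map rank).sum = 0 :=
  List.exists_eq_append_cons_of_sum_map_eq_one (by rwa [rank_node] at h)

theorem holeLabels_node_sublist {l : L} {cs ds : List (CTree L)} (h : cs <+ ds) :
    (node l cs).holeLabels <+ (node l ds).holeLabels := by
  simpa using (h.map holeLabels).flatten

end CTree

namespace CSub

open CTree

variable {L : Type}

theorem trans {s t u : CTree L} (h₁ : CSub s t) (h₂ : CSub t u) : CSub s u := by
  induction h₂ with
  | refl => exact h₁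
  | child hc _ ih => exact .child hc ih

theorem holeLabels_sublist {s t : CTree L} (h : CSub s t) : s.holeLabels <+ t.holeLabels := by
  induction h with
  | refl => exact .refl _
  | child hc _ ih =>
    exact ih.trans (by simpa using List.sublist_flatten_of_mem (List.mem_map_of_mem hc))

theorem vmerge {s t : CTree L} (b : CTree L) (h : CSub s t) : CSub (s.vmerge b) (t.vmerge b) := by
  induction h with
  | refl => exact .refl _
  | child hc _ ih => exact vmerge_node .. ▸ .child (List.mem_map_of_mem hc) ih

end CSub

theorem CTree.csub_vmerge_of_rank_pos {L : Type} (b : CTree L) {s : CTree L} (h : 0 < s.rank) :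
    CSub b (s.vmerge b) := by
  induction s with
  | hole l => simpa using .refl b
  | node l cs ih =>
    obtain ⟨c, hc, hpos⟩ : ∃ c ∈ cs, 0 < c.rank := by
      simpa [rank_node, Nat.pos_iff_ne_zero, List.sum_eq_zero_iff] using h
    exact vmerge_node .. ▸ .child (List.mem_map_of_mem hc) (ih c hc hpos)

namespace Punch

open CTree

variable {L : Type}

theorem rank_pos {c c' : CTree L} (h : Punch c c') : 0 < c'.rank := by
  induction h with
  | top => simp
  | inside l pre post _ ih => rw [rank_node_append_cons]; omega

theorem vmerge_self {b : CTree L} {d : CTree L}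
    (h : d.holeLabels = [b.rootLabel]) : Punch (d.vmerge b) d := by
  induction d with
  | hole l =>
    obtain rfl : l = b.rootLabel := by simpa using h
    simpa [rootLabel] using top b
  | node l cs ih =>
    have hr : (node l cs).rank = 1 := by rw [← length_holeLabels, h]; rfl
    obtain ⟨pre, d, post, rfl, -, hz⟩ := exists_eq_append_cons_of_rank_node_eq_one hr
    rw [holeLabels_node_append_cons hz] at h
    rw [vmerge_node_append_cons hz]
    exact inside l pre post (ih d (by simp) h)

/-- `e'.rank = 1` forces the punched node to lie above the unique hole of `e`, so plugging `b`
into that hole first makes no difference to `e'`. -/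
theorem vmerge {b e e' : CTree L} (h : Punch e e') (he : e.holeLabels = [b.rootLabel])
    (he' : e'.rank = 1) : Punch (e.vmerge b) e' := by
  induction h with
  | top c =>
    cases c with
    | hole l =>
      obtain rfl : l = b.rootLabel := by simpa using he
      simpa [rootLabel] using top b
    | node l cs => simpa [rootLabel] using top (node l (cs.map (CTree.vmerge · b)))
  | inside l pre post hp ih =>
    have := hp.rank_pos
    rw [rank_node_append_cons] at he'
    have hz : ((pre ++ post).map rank).sum = 0 := by omega
    rw [holeLabels_node_append_cons hz] at he
    rw [vmerge_node_append_cons hz]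
    exact inside l pre post (ih he (by omega))

end Punch

theorem strictPunch_iff {L : Type} {c c' : CTree L} :
    StrictPunch c c' ↔ Punch c c' ∧ ∀ l, c' ≠ .hole l := by
  constructor
  · rintro ⟨l, pre, post, d, d', rfl, rfl, h⟩
    exact ⟨.inside l pre post h, fun _ => nofun⟩
  · rintro ⟨h | ⟨l, pre, post, h⟩, hc'⟩
    · exact absurd rfl (hc' _)
    · exact ⟨l, pre, post, _, _, rfl, rfl, h⟩

theorem isSubcluster_iff_isInfix {L : Type} {c t : CTree L} :
    IsSubcluster c t ↔ ∃ l cs seg, CSub (.node l cs) t ∧ seg <:+: cs ∧ seg ≠ [] ∧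
      (c = .node l seg ∨ StrictPunch (.node l seg) c) := by
  simp only [IsSubcluster, List.isInfix_iff_exists_eq_take_drop]
  constructor
  · rintro ⟨l, cs, i, j, hsub, hne, hc⟩
    exact ⟨l, cs, _, hsub, ⟨i, j, rfl⟩, hne, hc⟩
  · rintro ⟨l, cs, _, hsub, ⟨i, j, rfl⟩, hne, hc⟩
    exact ⟨l, cs, i, j, hsub, hne, hc⟩

/-- If `c₀` has no hole, plugging in `b` changes nothing; otherwise `c`, having at most one hole,
keeps the hole of `c₀` or punches one above it, and either way the punch undoes the plug. -/
theorem eq_vmerge_or_strictPunch_vmerge {L : Type} {c₀ c b : CTree L}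
    (hc₀ : ∀ l, c₀ ≠ .hole l) (hsub : c₀.holeLabels <+ [b.rootLabel]) (hc : c.rank ≤ 1)
    (h : c = c₀ ∨ StrictPunch c₀ c) :
    c = c₀.vmerge b ∨ StrictPunch (c₀.vmerge b) c := by
  rcases List.sublist_singleton.mp hsub with hnil | hone
  · rwa [CTree.vmerge_of_rank_eq_zero b (by rw [← CTree.length_holeLabels, hnil]; rfl)]
  · right
    rcases h with rfl | hsp
    · exact strictPunch_iff.mpr ⟨.vmerge_self hone, hc₀⟩
    · obtain ⟨hp, hc'⟩ := strictPunch_iff.mp hsp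
      have := hp.rank_pos
      exact strictPunch_iff.mpr ⟨hp.vmerge hone (by omega), hc'⟩

namespace IsSubcluster

open CTree

variable {L : Type}

theorem self {l : L} {cs : List (CTree L)} (hne : cs ≠ []) :
    IsSubcluster (.node l cs) (.node l cs) :=
  isSubcluster_iff_isInfix.mpr ⟨l, cs, cs, .refl _, List.infix_refl cs, hne, .inl rfl⟩

theorem trans_csub {c s t : CTree L} (h : IsSubcluster c s) (hst : CSub s t) : IsSubcluster c t :=
  let ⟨l, cs, i, j, hsub, hne, hc⟩ := h
  ⟨l, cs, i, j, hsub.trans hst, hne, hc⟩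

theorem node_of_isInfix {c : CTree L} {a : L} {cs ds : List (CTree L)}
    (h : IsSubcluster c (.node a cs)) (hcs : cs <:+: ds) : IsSubcluster c (.node a ds) := by
  obtain ⟨l, cs', seg, hsub, hseg, hne, hc⟩ := isSubcluster_iff_isInfix.mp h
  refine isSubcluster_iff_isInfix.mpr ?_
  cases hsub with
  | refl => exact ⟨a, ds, seg, .refl _, hseg.trans hcs, hne, hc⟩
  | child hmem hsub => exact ⟨l, cs', seg, .child (hcs.subset hmem) hsub, hseg, hne, hc⟩

theorem vmerge {c s b : CTree L} (hc : c.rank ≤ 1) (h : IsSubcluster c s)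
    (hs : s.holeLabels = [b.rootLabel]) : IsSubcluster c (s.vmerge b) := by
  obtain ⟨l, cs, seg, hsub, hseg, hne, hcseg⟩ := isSubcluster_iff_isInfix.mp h
  have hholes : (node l seg).holeLabels <+ [b.rootLabel] :=
    hs ▸ (holeLabels_node_sublist hseg.sublist).trans hsub.holeLabels_sublist
  refine isSubcluster_iff_isInfix.mpr ⟨l, cs.map (CTree.vmerge · b), seg.map (CTree.vmerge · b),
    vmerge_node .. ▸ hsub.vmerge b, hseg.map _, by simpa using hne, ?_⟩
  simpa using eq_vmerge_or_strictPunch_vmerge (fun _ => by simp) hholes hc hcseg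

end IsSubcluster

namespace TopTree

open CTree

variable {L : Type} [DecidableEq L]

theorem eval_vmerge_eq_some {T₁ T₂ : TopTree L} {c : CTree L}
    (h : (vmerge T₁ T₂).eval = some c) :
    ∃ c₁ c₂, T₁.eval = some c₁ ∧ T₂.eval = some c₂ ∧ c₁.rank = 1 ∧
      c₁.holeLabels = [c₂.rootLabel] ∧ c = c₁.vmerge c₂ := by
  rw [eval] at h
  split at h
  · next c₁ c₂ h₁ h₂ =>
    split at h
    · next hcond =>
      exact ⟨c₁, c₂, h₁, h₂, hcond.1, hcond.2, (Option.some_injective _ h).symm⟩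
    · simp at h
  · simp at h

theorem eval_hmerge_eq_some {T₁ T₂ : TopTree L} {c : CTree L}
    (h : (hmerge T₁ T₂).eval = some c) :
    ∃ a cs ds, T₁.eval = some (node a cs) ∧ T₂.eval = some (node a ds) ∧
      (node a cs).rank + (node a ds).rank ≤ 1 ∧ c = node a (cs ++ ds) := by
  rw [eval] at h
  split at h
  · next a cs b ds h₁ h₂ =>
    split at h
    · next hcond =>
      obtain ⟨rfl, hrank⟩ := hcond
      exact ⟨a, cs, ds, h₁, h₂, hrank, (Option.some_injective _ h).symm⟩
    · simp at h
  · simp at h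

theorem rank_le_one_of_eval_eq_some {T : TopTree L} {c : CTree L} (h : T.eval = some c) :
    c.rank ≤ 1 := by
  induction T generalizing c with
  | leaf a b i =>
    obtain rfl := Option.some_injective _ (eval.eq_1 a b i ▸ h)
    cases i <;> simp
  | vmerge T₁ T₂ _ ih₂ =>
    obtain ⟨c₁, c₂, -, h₂, hr, -, rfl⟩ := eval_vmerge_eq_some h
    rw [rank_vmerge, hr, one_mul]
    exact ih₂ h₂
  | hmerge T₁ T₂ =>
    obtain ⟨a, cs, ds, -, -, hrank, rfl⟩ := eval_hmerge_eq_some h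
    simpa using hrank

theorem exists_eq_node_of_eval_eq_some {T : TopTree L} {c : CTree L} (h : T.eval = some c) :
    ∃ l cs, c = node l cs ∧ cs ≠ [] := by
  induction T generalizing c with
  | leaf a b i =>
    obtain rfl := Option.some_injective _ (eval.eq_1 a b i ▸ h)
    exact ⟨a, _, rfl, List.cons_ne_nil _ _⟩
  | vmerge T₁ T₂ ih₁ =>
    obtain ⟨c₁, c₂, h₁, -, -, -, rfl⟩ := eval_vmerge_eq_some h
    obtain ⟨l, cs, rfl, hne⟩ := ih₁ h₁
    exact ⟨l, _, vmerge_node .., by simpa using hne⟩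
  | hmerge T₁ T₂ ih₁ =>
    obtain ⟨a, cs, ds, h₁, -, -, rfl⟩ := eval_hmerge_eq_some h
    obtain ⟨l, cs', hcs, hne⟩ := ih₁ h₁
    obtain ⟨-, rfl⟩ := node.inj hcs
    exact ⟨a, _, rfl, by simp [hne]⟩

end TopTree

/-- Every subtree of a top tree `T` for a tree `t` evaluates to (an isomorphic
copy of) a subcluster of `t`. -/
theorem stmt11 {L : Type} [DecidableEq L] (T : TopTree L) (t : CTree L)
    (ht : T.eval = some t) (S : TopTree L) (hS : TSub S T) :
    ∃ c : CTree L, S.eval = some c ∧ IsSubcluster c t := by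
  induction hS generalizing t with
  | refl =>
    obtain ⟨l, cs, rfl, hne⟩ := TopTree.exists_eq_node_of_eval_eq_some ht
    exact ⟨_, ht, .self hne⟩
  | vleft _ ih =>
    obtain ⟨c₁, c₂, h₁, -, -, hholes, rfl⟩ := TopTree.eval_vmerge_eq_some ht
    obtain ⟨c, hc, hsub⟩ := ih _ h₁
    exact ⟨c, hc, hsub.vmerge (TopTree.rank_le_one_of_eval_eq_some hc) hholes⟩
  | vright _ ih =>
    obtain ⟨c₁, c₂, -, h₂, hrank, -, rfl⟩ := TopTree.eval_vmerge_eq_some ht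
    obtain ⟨c, hc, hsub⟩ := ih _ h₂
    exact ⟨c, hc, hsub.trans_csub (CTree.csub_vmerge_of_rank_pos c₂ (by omega))⟩
  | hleft _ ih =>
    obtain ⟨a, cs, ds, h₁, -, -, rfl⟩ := TopTree.eval_hmerge_eq_some ht
    obtain ⟨c, hc, hsub⟩ := ih _ h₁
    exact ⟨c, hc, hsub.node_of_isInfix (List.prefix_append cs ds).isInfix⟩
  | hright _ ih =>
    obtain ⟨a, cs, ds, -, h₂, -, rfl⟩ := TopTree.eval_hmerge_eq_some ht
    obtain ⟨c, hc, hsub⟩ := ih _ h₂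
    exact ⟨c, hc, hsub.node_of_isInfix (List.suffix_append cs ds).isInfix⟩
end
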